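/- arXiv:2404.13240 — 3 statements merged into one kernel-verified Lean document; each statement's English description precedes it below -/
import Mathlib

section
/- If a threshold θ satisfies π(θ) < p₋/(p₊δ₂ + p₋), where δ₂ > 0 lower-bounds the likelihood ratio φ(x|1)/φ(x|0), then the performative utility is bounded: U_perf(θ) ≤ p₊p₋/(p₊δ₂ + p₋)·ℙ(X>θ|Y=1) ≤ p₋/δ₂. -/
/-! The loss term `pNeg · FPR · (1 - π)` is nonnegative, so the utility is at most the gain
`pPos · TPR · π`, and `π < pNeg / (pPos δ₂ + pNeg)` bounds that. Finally `TPR ≤ 1` and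
`pPos δ₂ ≤ pPos δ₂ + pNeg` give the bound `pNeg / δ₂`. -/

theorem gain_sub_loss_le_of_le {pPos pNeg t f q c : ℝ} (hpPos : 0 ≤ pPos) (hpNeg : 0 ≤ pNeg)
    (ht : 0 ≤ t) (hf : 0 ≤ f) (hq₁ : q ≤ 1) (hqc : q ≤ c) :
    pPos * t * q - pNeg * f * (1 - q) ≤ pPos * c * t := by
  have hloss : 0 ≤ pNeg * f * (1 - q) := by
    have : 0 ≤ 1 - q := sub_nonneg.mpr hq₁
    positivity
  calc pPos * t * q - pNeg * f * (1 - q) ≤ pPos * t * q := sub_le_self _ hloss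
    _ ≤ pPos * t * c := mul_le_mul_of_nonneg_left hqc (mul_nonneg hpPos ht)
    _ = pPos * c * t := by ring

theorem mul_div_mul_add_le_div {a b δ : ℝ} (ha : 0 ≤ a) (hb : 0 < b) (hδ : 0 < δ) :
    a * b / (a * δ + b) ≤ b / δ := by
  rw [div_le_div_iff₀ (by positivity) hδ]
  nlinarith [mul_nonneg ha hb.le]

theorem low_qualification_utility_bound_general
    (TPR FPR π : ℝ → ℝ) (pPos pNeg δ₂ θ : ℝ)
    (hpPos : 0 < pPos) (hpNeg : 0 < pNeg) (hδ₂ : 0 < δ₂)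
    (hTPR : TPR θ ∈ Set.Icc (0:ℝ) 1)
    (hFPR : FPR θ ∈ Set.Icc (0:ℝ) 1)
    (hπ : π θ ∈ Set.Icc (0:ℝ) 1)
    (hsmall : π θ < pNeg / (pPos * δ₂ + pNeg)) :
    pPos * TPR θ * π θ - pNeg * FPR θ * (1 - π θ) ≤
      pPos * pNeg / (pPos * δ₂ + pNeg) * TPR θ ∧
    pPos * pNeg / (pPos * δ₂ + pNeg) * TPR θ ≤ pNeg / δ₂ := by
  obtain ⟨hT₀, hT₁⟩ := hTPR
  constructor
  · rw [mul_div_assoc]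
    exact gain_sub_loss_le_of_le hpPos.le hpNeg.le hT₀ hFPR.1 hπ.2 hsmall.le
  · calc pPos * pNeg / (pPos * δ₂ + pNeg) * TPR θ ≤ pPos * pNeg / (pPos * δ₂ + pNeg) :=
          mul_le_of_le_one_right (by positivity) hT₁
      _ ≤ pNeg / δ₂ := mul_div_mul_add_le_div hpPos.le hpNeg hδ₂

/-- if a threshold's qualification rate is below pNeg/(pPos·δ₂+pNeg)
then its performative utility is at most pPos·pNeg/(pPos·δ₂+pNeg)·TPR(θ) ≤ pNeg/δ₂. -/
theorem low_qualification_utility_bound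
    (TPR FPR π φ1 φ0 : ℝ → ℝ) (pPos pNeg δ₂ θ : ℝ)
    (hpPos : 0 < pPos) (hpNeg : 0 < pNeg) (hδ₂ : 0 < δ₂)
    (hTPR : TPR θ ∈ Set.Icc (0:ℝ) 1)
    (hFPR : FPR θ ∈ Set.Icc (0:ℝ) 1)
    (hπ : π θ ∈ Set.Icc (0:ℝ) 1)
    (hratio : ∀ x ∈ Set.Icc (0:ℝ) 1, δ₂ < φ1 x / φ0 x)
    (hsmall : π θ < pNeg / (pPos * δ₂ + pNeg)) :
    pPos * TPR θ * π θ - pNeg * FPR θ * (1 - π θ) ≤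
      pPos * pNeg / (pPos * δ₂ + pNeg) * TPR θ ∧
    pPos * pNeg / (pPos * δ₂ + pNeg) * TPR θ ≤ pNeg / δ₂ :=
  low_qualification_utility_bound_general TPR FPR π pPos pNeg δ₂ θ hpPos hpNeg hδ₂ hTPR hFPR hπ
    hsmall
end

section
/- Let y₀ < y₁ and suppose x ↦ φ(x|y₁)/φ(x|y₀) is increasing. Then for any probability density p on [0,1] and any y ∈ (0,1), the ratio x ↦ (∫₀^y φ(x|t)p(t)dt)/(∫_y^1 φ(x|t)p(t)dt) is monotonically decreasing in x, assuming φ(x|t)/φ(x|s) is decreasing in x whenever t < s, uniformly over all pairs t < s. -/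
/-!
Write `N x = ∫₀^y φ(x|t)p(t)dt` and `D x = ∫_y^1 φ(x|t)p(t)dt`. For `x₁ ≤ x₂` the likelihood
ratio property gives `φ(x₂|s)φ(x₁|t) ≤ φ(x₁|s)φ(x₂|t)` whenever `s ≤ t`; integrating this over
`s ∈ [0,y]`, `t ∈ [y,1]` against `p(s)p(t)` yields the cross inequality
`N x₂ · D x₁ ≤ N x₁ · D x₂`. Since `φ > 0`, `D x = 0` exactly when `p` vanishes a.e. on `[y,1]`,
which does not depend on `x`; so either both denominators vanish or the cross inequality divides out.
-/

open MeasureTheory Set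

theorem mul_le_mul_of_monotoneOn_div {φ : ℝ → ℝ → ℝ} {S : Set ℝ}
    (hpos : ∀ x ∈ S, ∀ t ∈ S, 0 < φ x t)
    (hMLR : ∀ s ∈ S, ∀ t ∈ S, s < t → MonotoneOn (fun x => φ x t / φ x s) S)
    {x₁ x₂ s t : ℝ} (hx₁ : x₁ ∈ S) (hx₂ : x₂ ∈ S) (hx : x₁ ≤ x₂)
    (hs : s ∈ S) (ht : t ∈ S) (hst : s ≤ t) :
    φ x₂ s * φ x₁ t ≤ φ x₁ s * φ x₂ t := by
  rcases hst.eq_or_lt with rfl | hlt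
  · rw [mul_comm]
  · have h := hMLR s hs t ht hlt hx₁ hx₂ hx
    rw [div_le_div_iff₀ (hpos x₁ hx₁ s hs) (hpos x₂ hx₂ s hs)] at h
    linarith

theorem integral_mul_integral_le_of_mul_le_mul {f g : ℝ → ℝ} {a b c : ℝ}
    (hab : a ≤ b) (hbc : b ≤ c)
    (hf₁ : IntervalIntegrable f volume a b) (hg₁ : IntervalIntegrable g volume a b)
    (hf₂ : IntervalIntegrable f volume b c) (hg₂ : IntervalIntegrable g volume b c)
    (h : ∀ s ∈ Icc a b, ∀ t ∈ Icc b c, g s * f t ≤ f s * g t) :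
    (∫ s in a..b, g s) * (∫ t in b..c, f t) ≤ (∫ s in a..b, f s) * ∫ t in b..c, g t := by
  rw [← intervalIntegral.integral_mul_const, ← intervalIntegral.integral_mul_const]
  refine intervalIntegral.integral_mono_on hab (hg₁.mul_const _) (hf₁.mul_const _)
    fun s hs => ?_
  rw [← intervalIntegral.integral_const_mul, ← intervalIntegral.integral_const_mul]
  exact intervalIntegral.integral_mono_on hbc (hf₂.const_mul _) (hg₂.const_mul _)
    fun t ht => h s hs t ht

theorem integral_mul_eq_zero_of_integral_mul_eq_zero {u v w : ℝ → ℝ} {a b : ℝ} (hab : a ≤ b)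
    (hu : ∀ t ∈ Ioc a b, 0 < u t) (hw : ∀ t ∈ Ioc a b, 0 ≤ w t)
    (huw : IntervalIntegrable (fun t => u t * w t) volume a b)
    (h : ∫ t in a..b, u t * w t = 0) :
    ∫ t in a..b, v t * w t = 0 := by
  rw [intervalIntegral.integral_of_le hab] at h ⊢
  have hnonneg : 0 ≤ᵐ[volume.restrict (Ioc a b)] fun t => u t * w t :=
    (ae_restrict_mem measurableSet_Ioc).mono fun t ht => mul_nonneg (hu t ht).le (hw t ht)
  have huw_zero := (integral_eq_zero_iff_of_nonneg_ae hnonneg huw.1).mp h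
  refine integral_eq_zero_of_ae ?_
  filter_upwards [huw_zero, ae_restrict_mem measurableSet_Ioc] with t ht hmem
  have hwt : w t = 0 := (mul_eq_zero.mp ht).resolve_left (hu t hmem).ne'
  simp [hwt]

theorem div_le_div_of_mul_le_mul_of_eq_zero_iff {a₁ a₂ b₁ b₂ : ℝ} (hb₁ : 0 ≤ b₁) (hb₂ : 0 ≤ b₂)
    (hb : b₁ = 0 ↔ b₂ = 0) (h : a₂ * b₁ ≤ a₁ * b₂) :
    a₂ / b₂ ≤ a₁ / b₁ := by
  rcases hb₁.eq_or_lt with hb₁ | hb₁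
  · simp [← hb₁, hb.mp hb₁.symm]
  · have hb₂ : 0 < b₂ := hb₂.lt_of_ne fun h => hb₁.ne' (hb.mpr h.symm)
    rwa [div_le_div_iff₀ hb₂ hb₁]

theorem mlr_ratio_antitone_general
    (φ : ℝ → ℝ → ℝ) (p : ℝ → ℝ) (y : ℝ)
    (hy : y ∈ Set.Ioo (0:ℝ) 1)
    (hφpos : ∀ x ∈ Set.Icc (0:ℝ) 1, ∀ t ∈ Set.Icc (0:ℝ) 1, 0 < φ x t)
    (hφcont : Continuous fun q : ℝ × ℝ => φ q.1 q.2)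
    (hp : ∀ t ∈ Set.Icc (0:ℝ) 1, 0 ≤ p t)
    (hpcont : Continuous p)
    (hMLR : ∀ s ∈ Set.Icc (0:ℝ) 1, ∀ t ∈ Set.Icc (0:ℝ) 1, s < t →
        MonotoneOn (fun x => φ x t / φ x s) (Set.Icc 0 1)) :
    AntitoneOn
      (fun x => (∫ t in (0:ℝ)..y, φ x t * p t) / (∫ t in y..1, φ x t * p t))
      (Set.Icc 0 1) := by
  obtain ⟨hy₀, hy₁⟩ := hy
  have hIoc : Ioc y 1 ⊆ Icc 0 1 := fun t ht => ⟨hy₀.le.trans ht.1.le, ht.2⟩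
  have hint : ∀ x a b, IntervalIntegrable (fun t => φ x t * p t) volume a b := fun x _ _ =>
    ((hφcont.comp (Continuous.prodMk_right x)).mul hpcont).intervalIntegrable _ _
  have hD_zero : ∀ x ∈ Icc (0:ℝ) 1, ∀ x', (∫ t in y..1, φ x t * p t) = 0 →
      ∫ t in y..1, φ x' t * p t = 0 := fun x hx x' =>
    integral_mul_eq_zero_of_integral_mul_eq_zero hy₁.le (fun t ht => hφpos x hx t (hIoc ht))
      (fun t ht => hp t (hIoc ht)) (hint x y 1)
  have hD_nonneg : ∀ x ∈ Icc (0:ℝ) 1, 0 ≤ ∫ t in y..1, φ x t * p t := fun x hx =>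
    intervalIntegral.integral_nonneg hy₁.le fun t ht =>
      mul_nonneg (hφpos x hx t ⟨hy₀.le.trans ht.1, ht.2⟩).le (hp t ⟨hy₀.le.trans ht.1, ht.2⟩)
  intro x₁ hx₁ x₂ hx₂ hx
  refine div_le_div_of_mul_le_mul_of_eq_zero_iff (hD_nonneg x₁ hx₁) (hD_nonneg x₂ hx₂)
    ⟨hD_zero x₁ hx₁ x₂, hD_zero x₂ hx₂ x₁⟩ ?_
  refine integral_mul_integral_le_of_mul_le_mul hy₀.le hy₁.le (hint _ _ _) (hint _ _ _)
    (hint _ _ _) (hint _ _ _) fun s hs t ht => ?_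
  have hs' : s ∈ Icc (0:ℝ) 1 := ⟨hs.1, hs.2.trans hy₁.le⟩
  have ht' : t ∈ Icc (0:ℝ) 1 := ⟨hy₀.le.trans ht.1, ht.2⟩
  have hφ := mul_le_mul_of_monotoneOn_div hφpos hMLR hx₁ hx₂ hx hs' ht' (hs.2.trans ht.1)
  calc φ x₂ s * p s * (φ x₁ t * p t) = φ x₂ s * φ x₁ t * (p s * p t) := by ring
    _ ≤ φ x₁ s * φ x₂ t * (p s * p t) := by gcongr; exact mul_nonneg (hp s hs') (hp t ht')
    _ = φ x₁ s * p s * (φ x₂ t * p t) := by ring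

/-- under the monotone likelihood ratio property, the ratio
(∫₀^y φ(x|t)p(t)dt)/(∫_y^1 φ(x|t)p(t)dt) is monotonically decreasing in x. -/
theorem mlr_ratio_antitone
    (φ : ℝ → ℝ → ℝ) (p : ℝ → ℝ) (y : ℝ)
    (hy : y ∈ Set.Ioo (0:ℝ) 1)
    (hφpos : ∀ x ∈ Set.Icc (0:ℝ) 1, ∀ t ∈ Set.Icc (0:ℝ) 1, 0 < φ x t)
    (hφcont : Continuous fun q : ℝ × ℝ => φ q.1 q.2)
    (hp : ∀ t ∈ Set.Icc (0:ℝ) 1, 0 ≤ p t)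
    (hpcont : Continuous p)
    (hpdens : (∫ t in (0:ℝ)..1, p t) = 1)
    (hMLR : ∀ s ∈ Set.Icc (0:ℝ) 1, ∀ t ∈ Set.Icc (0:ℝ) 1, s < t →
        MonotoneOn (fun x => φ x t / φ x s) (Set.Icc 0 1)) :
    AntitoneOn
      (fun x => (∫ t in (0:ℝ)..y, φ x t * p t) / (∫ t in y..1, φ x t * p t))
      (Set.Icc 0 1) :=
  mlr_ratio_antitone_general φ p y hy hφpos hφcont hp hpcont hMLR
end

section
/- In the Coate–Loury model with p₋ = 0: every stable threshold θ_stab satisfies π(θ_stab) = 0 and hence U_perf(θ_stab) = 0, while if there exists θ̃ with G(w[TPR(θ̃) − FPR(θ̃)]) > 0 and TPR(θ̃) > 0, then the optimal performative utility is strictly positive: U_perf(θ_opt) > 0 = U_perf(θ_stab). -/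
/-!
With no penalty for unqualified hires, any positive induced qualification rate makes hiring
everyone (θ = 0) the unique best response, since TPR is maximal there. But hiring everyone gives
TPR = FPR, hence π = G(0) = 0, so a stable threshold can only have π = 0.
-/

theorem eq_zero_of_isMaxOn_weighted_strictAntiOn {f g : ℝ → ℝ} {s : Set ℝ} {a x c : ℝ}
    (hf : StrictAntiOn f s) (ha : IsLeast s a) (hga : g a = 0) (hgx : 0 ≤ g x) (hc : 0 < c)
    (hx : x ∈ s) (hmax : ∀ θ ∈ s, c * g x * f θ ≤ c * g x * f x) : g x = 0 := by
  by_contra hne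
  have hweight : 0 < c * g x := mul_pos hc (hgx.lt_of_ne' hne)
  have hfa : f a ≤ f x := le_of_mul_le_mul_left (hmax a ha.1) hweight
  have hxa : x = a := le_antisymm ((hf.le_iff_ge ha.1 hx).1 hfa) (ha.2 hx)
  exact hne (hxa ▸ hga)

theorem zero_penalty_stable_vs_optimal_general
    (TPR FPR π G : ℝ → ℝ) (w pPos θtil : ℝ)
    (hpPos : 0 < pPos)
    (hGrange : ∀ t, G t ∈ Set.Icc (0:ℝ) 1)
    (hG0 : G 0 = 0)
    (hπ : ∀ θ, π θ = G (w * (TPR θ - FPR θ)))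
    (hTPR0 : TPR 0 = 1) (hFPR0 : FPR 0 = 1)
    (hTPRanti : StrictAntiOn TPR (Set.Icc 0 1))
    (hθtil : θtil ∈ Set.Icc (0:ℝ) 1)
    (hπtil : 0 < π θtil) (hTPRtil : 0 < TPR θtil) :
    (∀ θstab ∈ Set.Icc (0:ℝ) 1,
        (∀ θ ∈ Set.Icc (0:ℝ) 1,
            pPos * π θstab * TPR θ ≤ pPos * π θstab * TPR θstab) →
        π θstab = 0 ∧ pPos * TPR θstab * π θstab = 0) ∧
    (∀ θopt ∈ Set.Icc (0:ℝ) 1,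
        (∀ θ ∈ Set.Icc (0:ℝ) 1,
            pPos * TPR θ * π θ ≤ pPos * TPR θopt * π θopt) →
        0 < pPos * TPR θopt * π θopt) := by
  have hπ_nonneg : ∀ θ, 0 ≤ π θ := fun θ => hπ θ ▸ (hGrange _).1
  have hπ_zero : π 0 = 0 := by rw [hπ, hTPR0, hFPR0, sub_self, mul_zero, hG0]
  refine ⟨fun θstab hθstab hstable => ?_, fun θopt _ hopt => ?_⟩
  · have hπstab : π θstab = 0 := eq_zero_of_isMaxOn_weighted_strictAntiOn hTPRanti
      (isLeast_Icc zero_le_one) hπ_zero (hπ_nonneg θstab) hpPos hθstab hstable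
    exact ⟨hπstab, by rw [hπstab, mul_zero]⟩
  · exact (mul_pos (mul_pos hpPos hTPRtil) hπtil).trans_le (hopt θtil hθtil)

/-- Coate–Loury model with zero penalty pNeg = 0. Every stable
threshold has π = 0 and zero performative utility, while (given a threshold
with positive induced qualification and positive TPR) the optimal performative
utility is strictly positive. -/
theorem zero_penalty_stable_vs_optimal
    (TPR FPR π G : ℝ → ℝ) (w pPos θtil : ℝ)
    (hw : 0 < w) (hpPos : 0 < pPos)
    (hTPR : ∀ θ, TPR θ ∈ Set.Icc (0:ℝ) 1)
    (hFPR : ∀ θ, FPR θ ∈ Set.Icc (0:ℝ) 1)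
    (hGrange : ∀ t, G t ∈ Set.Icc (0:ℝ) 1)
    (hG0 : G 0 = 0)
    (hπ : ∀ θ, π θ = G (w * (TPR θ - FPR θ)))
    (hTPR1 : TPR 1 = 0) (hFPR1 : FPR 1 = 0)
    (hTPR0 : TPR 0 = 1) (hFPR0 : FPR 0 = 1)
    (hTPRanti : StrictAntiOn TPR (Set.Icc 0 1))
    (hθtil : θtil ∈ Set.Icc (0:ℝ) 1)
    (hπtil : 0 < π θtil) (hTPRtil : 0 < TPR θtil) :
    (∀ θstab ∈ Set.Icc (0:ℝ) 1,
        (∀ θ ∈ Set.Icc (0:ℝ) 1,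
            pPos * π θstab * TPR θ ≤ pPos * π θstab * TPR θstab) →
        π θstab = 0 ∧ pPos * TPR θstab * π θstab = 0) ∧
    (∀ θopt ∈ Set.Icc (0:ℝ) 1,
        (∀ θ ∈ Set.Icc (0:ℝ) 1,
            pPos * TPR θ * π θ ≤ pPos * TPR θopt * π θopt) →
        0 < pPos * TPR θopt * π θopt) :=
  zero_penalty_stable_vs_optimal_general TPR FPR π G w pPos θtil hpPos hGrange hG0 hπ hTPR0 hFPR0
    hTPRanti hθtil hπtil hTPRtil
end
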